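/- Fix an integer range {M,…,N} of mode indices and a parameter ε > 0; for each index l let k_l : (0,∞) → ℝ be differentiable with k_l(R) > 0, let θ_l : (0,∞) → ℝ be any function, let A_l : (0,∞) → ℂ be differentiable, and for each pair l, j let C_{lj} : (0,∞) → ℝ and m_{lj} : (0,∞) → ℝ be functions with m_{lj}(R) = m_{jl}(R) for all R. Suppose the family (A_l) satisfies the coupled-mode system (MPE) with the coefficients α_{lj}(R) = m_{lj}(R) − i k_j(R) ( C_{lj}(R) − C_{jl}(R) ). Then for every R > 0: Σ_{l=M}^{N} [ (d/dR)( k_l(R) |A_l(R)|² ) + (1/R) k_l(R) |A_l(R)|² ] + Σ_{l=M}^{N} Σ_{j=M}^{N} ( k_l(R) − k_j(R) ) C_{lj}(R) · Re( A_j(R) conj(A_l(R)) e^{i(θ_j(R)−θ_l(R))/ε} ) = 0. -/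

import Mathlib

/-!
Multiply the `l`-th equation by `conj A_l` and take imaginary parts. Since
`Im (2 i k A' conj A) = k (|A|²)'`, the terms without coupling give exactly
`(k_l |A_l|²)' + k_l |A_l|² / R`. With `Z_{lj} = A_j conj A_l e^{i(θ_j − θ_l)/ε}` one has
`Z_{jl} = conj Z_{lj}`, so after summing over `l` the real symmetric `m_{lj} Im Z_{lj}` cancel,
and exchanging `l` and `j` in the part `k_j C_{jl} Re Z_{lj}` turns the remaining coupling
terms into `∑_{l,j} (k_l − k_j) C_{lj} Re Z_{lj}`.
-/

open Finset Complex ComplexConjugate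

section

variable {ι : Type*}

theorem Finset.sum_sum_eq_zero_of_antisymm {G : Type*} [AddCommGroup G] [IsAddTorsionFree G]
    (s : Finset ι) (f : ι → ι → G) (hf : ∀ i ∈ s, ∀ j ∈ s, f j i = -f i j) :
    ∑ i ∈ s, ∑ j ∈ s, f i j = 0 := by
  refine neg_eq_self.mp ?_
  calc -∑ i ∈ s, ∑ j ∈ s, f i j = ∑ i ∈ s, ∑ j ∈ s, f j i := by
        simp only [← sum_neg_distrib]
        exact sum_congr rfl fun i hi => sum_congr rfl fun j hj => (hf i hi j hj).symm
    _ = ∑ i ∈ s, ∑ j ∈ s, f i j := sum_comm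

theorem HasDerivAt.mul_norm_sq {k : ℝ → ℝ} {A : ℝ → ℂ} {k' x : ℝ} {A' : ℂ}
    (hk : HasDerivAt k k' x) (hA : HasDerivAt A A' x) :
    HasDerivAt (fun s => k s * ‖A s‖ ^ 2) (k' * ‖A x‖ ^ 2 + 2 * k x * (A' * conj (A x)).re) x :=
  (hk.mul hA.norm_sq).congr_deriv (by rw [Complex.inner]; ring)

theorem im_transport_mul_conj (k k' r : ℝ) (a a' : ℂ) :
    ((2 * I * k * a' + I * k' * a + I / r * k * a) * conj a).im
      = k' * ‖a‖ ^ 2 + 2 * k * (a' * conj a).re + 1 / r * k * ‖a‖ ^ 2 := by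
  have h : (2 * I * k * a' + I * k' * a + I / r * k * a) * conj a
      = I * ((2 * k : ℝ) * (a' * conj a) + ((k' + 1 / r * k) * ‖a‖ ^ 2 : ℝ)) := by
    push_cast
    linear_combination (I * k' + I / r * k) * mul_conj' a
  rw [h, I_mul_im, add_re, re_ofReal_mul, ofReal_re]
  ring

noncomputable def interference (ε : ℝ) (θ : ι → ℝ) (a : ι → ℂ) (l j : ι) : ℂ :=
  a j * conj (a l) * exp (I * ((θ j : ℂ) - θ l) / ε)

theorem conj_interference (ε : ℝ) (θ : ι → ℝ) (a : ι → ℂ) (l j : ι) :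
    conj (interference ε θ a l j) = interference ε θ a j l := by
  have hphase : conj (I * ((θ j : ℂ) - θ l) / ε) = I * ((θ l : ℂ) - θ j) / ε := by
    simp only [map_div₀, map_mul, map_sub, conj_I, conj_ofReal]
    ring
  simp only [interference, map_mul, ← exp_conj, hphase, conj_conj]
  ring

theorem energy_balance_of_coupled_mode {s : Finset ι} {ε R : ℝ}
    {k θ : ι → ℝ → ℝ} {A : ι → ℝ → ℂ} {C m : ι → ι → ℝ → ℝ} {l : ι}
    (hk : DifferentiableAt ℝ (k l) R) (hA : DifferentiableAt ℝ (A l) R)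
    (hmode : 2 * I * k l R * deriv (A l) R + I * ((deriv (k l) R : ℝ) : ℂ) * A l R
        + I / R * k l R * A l R
        + ∑ j ∈ s, ((m l j R : ℂ) - I * k j R * ((C l j R : ℂ) - C j l R)) * A j R
            * exp (I * ((θ j R : ℂ) - θ l R) / ε) = 0) :
    deriv (fun s => k l s * ‖A l s‖ ^ 2) R + 1 / R * k l R * ‖A l R‖ ^ 2
      + ∑ j ∈ s, (m l j R * (interference ε (θ · R) (A · R) l j).im
          - k j R * (C l j R - C j l R) * (interference ε (θ · R) (A · R) l j).re) = 0 := by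
  have him := congrArg (fun z => (z * conj (A l R)).im) hmode
  rw [add_mul, sum_mul, add_im, im_sum, im_transport_mul_conj, zero_mul, zero_im] at him
  rw [(hk.hasDerivAt.mul_norm_sq hA.hasDerivAt).deriv, ← him]
  congr 1
  refine sum_congr rfl fun j _ => ?_
  simp only [interference, mul_im, mul_re, sub_re, sub_im, I_re, I_im, ofReal_re, ofReal_im]
  ring
end

theorem MPE_energy_identity_lossless_general
    (ε : ℝ) (M N : ℤ)
    (k θ : ℤ → ℝ → ℝ) (A : ℤ → ℝ → ℂ) (C m : ℤ → ℤ → ℝ → ℝ)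
    (hk : ∀ l ∈ Finset.Icc M N, ∀ R ∈ Set.Ioi (0:ℝ), DifferentiableAt ℝ (k l) R)
    (hA : ∀ l ∈ Finset.Icc M N, ∀ R ∈ Set.Ioi (0:ℝ), DifferentiableAt ℝ (A l) R)
    (hm : ∀ l ∈ Finset.Icc M N, ∀ j ∈ Finset.Icc M N, ∀ R ∈ Set.Ioi (0:ℝ), m l j R = m j l R)
    (hMPE : ∀ l ∈ Finset.Icc M N, ∀ R ∈ Set.Ioi (0:ℝ),
      2 * Complex.I * (k l R : ℂ) * deriv (A l) R
        + Complex.I * ((deriv (k l) R : ℝ) : ℂ) * A l R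
        + Complex.I / (R : ℂ) * (k l R : ℂ) * A l R
        + ∑ j ∈ Finset.Icc M N,
            ((m l j R : ℂ) - Complex.I * (k j R : ℂ) * ((C l j R : ℂ) - (C j l R : ℂ)))
              * A j R
              * Complex.exp (Complex.I * ((θ j R : ℂ) - (θ l R : ℂ)) / (ε : ℂ)) = 0) :
    ∀ R ∈ Set.Ioi (0:ℝ),
      (∑ l ∈ Finset.Icc M N,
        (deriv (fun s => k l s * ‖A l s‖ ^ 2) R
          + (1 / R) * k l R * ‖A l R‖ ^ 2))
      + ∑ l ∈ Finset.Icc M N, ∑ j ∈ Finset.Icc M N,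
          (k l R - k j R) * C l j R *
            (A j R * (starRingEnd ℂ) (A l R)
              * Complex.exp (Complex.I * ((θ j R : ℂ) - (θ l R : ℂ)) / (ε : ℂ))).re = 0 := by
  intro R hR
  set Z := interference ε (θ · R) (A · R)
  have hbalance := fun l hl =>
    energy_balance_of_coupled_mode (hk l hl R hR) (hA l hl R hR) (hMPE l hl R hR)
  have hanti : ∑ l ∈ Icc M N, ∑ j ∈ Icc M N,
      (m l j R * (Z l j).im + k j R * C j l R * (Z l j).re - k l R * C l j R * (Z l j).re) = 0 := by
    refine sum_sum_eq_zero_of_antisymm _ _ fun l hl j hj => ?_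
    rw [← show conj (Z l j) = Z j l from conj_interference .., conj_im, conj_re, hm j hj l hl R hR]
    ring
  show _ + ∑ l ∈ Icc M N, ∑ j ∈ Icc M N, (k l R - k j R) * C l j R * (Z l j).re = 0
  calc _ = ∑ l ∈ Icc M N, (deriv (fun s => k l s * ‖A l s‖ ^ 2) R + 1 / R * k l R * ‖A l R‖ ^ 2
          + ∑ j ∈ Icc M N, (m l j R * (Z l j).im - k j R * (C l j R - C j l R) * (Z l j).re))
        - ∑ l ∈ Icc M N, ∑ j ∈ Icc M N,
          (m l j R * (Z l j).im + k j R * C j l R * (Z l j).re - k l R * C l j R * (Z l j).re) := by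
        rw [← sum_add_distrib, ← sum_sub_distrib]
        refine sum_congr rfl fun l _ => ?_
        rw [add_sub_assoc, ← sum_sub_distrib]
        exact congrArg _ (sum_congr rfl fun j _ => by ring)
    _ = 0 := by rw [sum_eq_zero hbalance, hanti, sub_zero]

/-- **Energy identity for the coupled-mode system with lossless coefficients.**
If the amplitudes `A_l` satisfy the coupled-mode system (MPE) with coefficients
`α_{lj} = m_{lj} − i k_j (C_{lj} − C_{jl})`, where the `m_{lj}` are real and
symmetric, then for every `R > 0`,
`∑_l [ (k_l |A_l|²)' + (1/R) k_l |A_l|² ]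
  + ∑_{l,j} (k_l − k_j) C_{lj} Re( A_j conj(A_l) e^{i(θ_j−θ_l)/ε} ) = 0`. -/
theorem MPE_energy_identity_lossless
    (ε : ℝ) (hε : 0 < ε) (M N : ℤ)
    (k θ : ℤ → ℝ → ℝ) (A : ℤ → ℝ → ℂ) (C m : ℤ → ℤ → ℝ → ℝ)
    (hk : ∀ l ∈ Finset.Icc M N, ∀ R ∈ Set.Ioi (0:ℝ), DifferentiableAt ℝ (k l) R)
    (hkpos : ∀ l ∈ Finset.Icc M N, ∀ R ∈ Set.Ioi (0:ℝ), 0 < k l R)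
    (hA : ∀ l ∈ Finset.Icc M N, ∀ R ∈ Set.Ioi (0:ℝ), DifferentiableAt ℝ (A l) R)
    (hm : ∀ l ∈ Finset.Icc M N, ∀ j ∈ Finset.Icc M N, ∀ R ∈ Set.Ioi (0:ℝ), m l j R = m j l R)
    (hMPE : ∀ l ∈ Finset.Icc M N, ∀ R ∈ Set.Ioi (0:ℝ),
      2 * Complex.I * (k l R : ℂ) * deriv (A l) R
        + Complex.I * ((deriv (k l) R : ℝ) : ℂ) * A l R
        + Complex.I / (R : ℂ) * (k l R : ℂ) * A l R
        + ∑ j ∈ Finset.Icc M N,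
            ((m l j R : ℂ) - Complex.I * (k j R : ℂ) * ((C l j R : ℂ) - (C j l R : ℂ)))
              * A j R
              * Complex.exp (Complex.I * ((θ j R : ℂ) - (θ l R : ℂ)) / (ε : ℂ)) = 0) :
    ∀ R ∈ Set.Ioi (0:ℝ),
      (∑ l ∈ Finset.Icc M N,
        (deriv (fun s => k l s * ‖A l s‖ ^ 2) R
          + (1 / R) * k l R * ‖A l R‖ ^ 2))
      + ∑ l ∈ Finset.Icc M N, ∑ j ∈ Finset.Icc M N,
          (k l R - k j R) * C l j R *
            (A j R * (starRingEnd ℂ) (A l R)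
              * Complex.exp (Complex.I * ((θ j R : ℂ) - (θ l R : ℂ)) / (ε : ℂ))).re = 0 :=
  MPE_energy_identity_lossless_general ε M N k θ A C m hk hA hm hMPE
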